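/- (Existence and uniqueness for discrete BSDEs) Suppose the driver F: Ω × {0,...,T} × R^K × R^{K×N} → R^K satisfies: (i) if Z^1 ∼_M Z^2 then F(ω,t,Y_t,Z^1_t) = F(ω,t,Y_t,Z^2_t) a.s. for all t and Y; (ii) for any Z and t, the map y ↦ y - F(ω,t,y,Z_t) is a.s. a bijection of R^K. Then for any essentially bounded F_T-measurable terminal condition Q in R^K, the backward equation Y_t - ∑_{t≤u<T} F(ω,u,Y_u,Z_u) + ∑_{t≤u<T} Z_u M_{u+1} = Q has an adapted solution (Y,Z), unique up to indistinguishability for Y and ∼_M-equivalence for Z. -/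

import Mathlib

/-!
Because `𝓕 t` is generated by the finitely many possible paths of `X` up to time `t`, an
`𝓕 t`-measurable function is just a function of that path; in particular it is bounded. An
`𝓕 (t + 1)`-measurable `H` is a function of the path up to `t` and of the basis vector `X (t + 1)`,
so it is linear in `X (t + 1)` with `𝓕 t`-measurable coefficients `Z`, whence
`H - E[H | 𝓕 t] = Z M (t + 1)` (martingale representation).

The solution is built backwards from `Y T = Q`: `Z t` represents `Y (t + 1)`, and `Y t` is the
preimage of `E[Y (t + 1) | 𝓕 t]` under `y ↦ y - F(t, y, Z t)`. For uniqueness, conditioning the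
one-step equation `Y t - F(t, Y t, Z t) + Z t M (t + 1) = Y (t + 1)` on `𝓕 t` kills the martingale
term, which identifies `Y t - F(t, Y t, Z t)` and then `Z t M (t + 1)` for two solutions; (i) and
the injectivity in (ii) then give back `Y t`.
-/

open MeasureTheory Filter Set Function Matrix

section ComapOfCountableRange

variable {Ω P β : Type*} {φ : Ω → P} {f : Ω → β}

theorem Function.FactorsThrough.finite_range (hf : f.FactorsThrough φ)
    (hφ : (range φ).Finite) : (range f).Finite := by
  refine (hφ.biUnion fun p _ => Subsingleton.finite (s := f '' (φ ⁻¹' {p})) ?_).subset ?_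
  · rintro _ ⟨a, ha, rfl⟩ _ ⟨b, hb, rfl⟩
    exact hf (ha.trans hb.symm)
  · rintro _ ⟨ω, rfl⟩
    exact mem_biUnion (mem_range_self ω) ⟨ω, rfl, rfl⟩

variable [MeasurableSpace P] [MeasurableSingletonClass P]

theorem Function.FactorsThrough.measurable_comap [MeasurableSpace β] (hf : f.FactorsThrough φ)
    (hφ : (range φ).Countable) : Measurable[MeasurableSpace.comap φ ‹_›] f := by
  intro B _
  refine ⟨φ '' (f ⁻¹' B), (hφ.mono (image_subset_range _ _)).measurableSet, ?_⟩
  ext ω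
  constructor
  · rintro ⟨ω', hω', hφω⟩
    rwa [mem_preimage, ← hf hφω]
  · exact fun hω => ⟨ω, hω, rfl⟩

theorem Function.FactorsThrough.stronglyMeasurable_comap [TopologicalSpace β]
    [TopologicalSpace.PseudoMetrizableSpace β] [SecondCountableTopology β]
    (hf : f.FactorsThrough φ) (hφ : (range φ).Countable) :
    StronglyMeasurable[MeasurableSpace.comap φ ‹_›] f := by
  borelize β
  exact (hf.measurable_comap hφ).stronglyMeasurable

end ComapOfCountableRange

def pathUpTo {Ω E : Type*} (X : ℕ → Ω → E) (t : ℕ) (ω : Ω) : Fin (t + 1) → E :=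
  fun s => X s ω

theorem pathUpTo_succ {Ω E : Type*} (X : ℕ → Ω → E) (t : ℕ) (ω : Ω) :
    pathUpTo X (t + 1) ω = Fin.snoc (α := fun _ => E) (pathUpTo X t ω) (X (t + 1) ω) := by
  funext s
  refine Fin.lastCases ?_ (fun i => ?_) s <;> simp [pathUpTo]

structure IsFiniteNaturalFiltration {Ω E : Type*} {m0 : MeasurableSpace Ω} [MeasurableSpace E]
    (𝓕 : Filtration ℕ m0) (X : ℕ → Ω → E) : Prop where
  finite_range : ∀ t, (range (X t)).Finite
  eq_comap : ∀ t, 𝓕 t = MeasurableSpace.comap (pathUpTo X t) inferInstance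

namespace IsFiniteNaturalFiltration

variable {Ω E β : Type*} {m0 : MeasurableSpace Ω} [MeasurableSpace E]
  {𝓕 : Filtration ℕ m0} {X : ℕ → Ω → E} {t : ℕ} {f : Ω → β}

theorem finite_range_pathUpTo (h : IsFiniteNaturalFiltration 𝓕 X) (t : ℕ) :
    (range (pathUpTo X t)).Finite :=
  (Finite.pi (t := fun s : Fin (t + 1) => range (X s)) fun s => h.finite_range s).subset <| by
    rintro _ ⟨ω, rfl⟩
    exact fun s _ => mem_range_self ω

theorem stronglyMeasurable_of_factorsThrough [MeasurableSingletonClass E] [TopologicalSpace β]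
    [TopologicalSpace.PseudoMetrizableSpace β] [SecondCountableTopology β]
    (h : IsFiniteNaturalFiltration 𝓕 X) (hf : f.FactorsThrough (pathUpTo X t)) :
    StronglyMeasurable[𝓕 t] f := by
  rw [h.eq_comap t]
  exact hf.stronglyMeasurable_comap (h.finite_range_pathUpTo t).countable

theorem factorsThrough_of_stronglyMeasurable [TopologicalSpace β]
    [TopologicalSpace.PseudoMetrizableSpace β] [T1Space β]
    (h : IsFiniteNaturalFiltration 𝓕 X) (hf : StronglyMeasurable[𝓕 t] f) :
    f.FactorsThrough (pathUpTo X t) := by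
  rw [h.eq_comap t] at hf
  exact hf.factorsThrough

theorem stronglyMeasurable [MeasurableSingletonClass E] [TopologicalSpace E]
    [TopologicalSpace.PseudoMetrizableSpace E] [SecondCountableTopology E] (h : IsFiniteNaturalFiltration 𝓕 X) (t : ℕ) :
    StronglyMeasurable[𝓕 t] (X t) :=
  h.stronglyMeasurable_of_factorsThrough fun _ _ hab => congrFun hab (Fin.last t)

theorem exists_norm_le [NormedAddCommGroup β] (h : IsFiniteNaturalFiltration 𝓕 X)
    (hf : StronglyMeasurable[𝓕 t] f) : ∃ C, ∀ ω, ‖f ω‖ ≤ C := by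
  obtain ⟨C, hC⟩ := ((h.factorsThrough_of_stronglyMeasurable hf).finite_range
    (h.finite_range_pathUpTo t)).isBounded.exists_norm_le
  exact ⟨C, fun ω => hC _ (mem_range_self ω)⟩

theorem integrable [NormedAddCommGroup β] {μ : Measure Ω} [IsFiniteMeasure μ]
    (h : IsFiniteNaturalFiltration 𝓕 X) (hf : StronglyMeasurable[𝓕 t] f) : Integrable f μ := by
  obtain ⟨C, hC⟩ := h.exists_norm_le hf
  exact .of_bound (hf.mono (𝓕.le t)).aestronglyMeasurable C (ae_of_all _ hC)

end IsFiniteNaturalFiltration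

noncomputable def Matrix.mulVecBilinL (ι κ : Type*) [Fintype ι] [Fintype κ] :
    (ι → κ → ℝ) →L[ℝ] (κ → ℝ) →L[ℝ] ι → ℝ :=
  (mulVecBilin ℝ ℝ).toContinuousBilinearMap

section CondExp

variable {Ω ι κ E : Type*} {m m0 : MeasurableSpace Ω} {μ : Measure Ω}
  [Fintype ι] [Fintype κ]

theorem MeasureTheory.StronglyMeasurable.mulVec {Z : Ω → ι → κ → ℝ} {V : Ω → κ → ℝ}
    (hZ : StronglyMeasurable[m] Z) (hV : StronglyMeasurable[m] V) :
    StronglyMeasurable[m] fun ω => Z ω *ᵥ V ω :=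
  (mulVecBilinL ι κ).continuous₂.comp_stronglyMeasurable (hZ.prodMk hV)

theorem condExp_mulVec_of_stronglyMeasurable_left {Z : Ω → ι → κ → ℝ} {V : Ω → κ → ℝ}
    (hZ : StronglyMeasurable[m] Z) (hZV : Integrable (fun ω => Z ω *ᵥ V ω) μ)
    (hV : Integrable V μ) :
    μ[fun ω => Z ω *ᵥ V ω | m] =ᵐ[μ] fun ω => Z ω *ᵥ μ[V | m] ω :=
  condExp_bilin_of_stronglyMeasurable_left (mulVecBilinL ι κ) hZ hZV hV

variable [NormedAddCommGroup E] [NormedSpace ℝ E] [CompleteSpace E]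

theorem condExp_sub_condExp_ae_eq_zero (hm : m ≤ m0) [SigmaFinite (μ.trim hm)] {V : Ω → E}
    (hV : Integrable V μ) : μ[V - μ[V | m] | m] =ᵐ[μ] 0 := by
  filter_upwards [condExp_sub hV integrable_condExp m] with ω hω
  rw [hω, condExp_of_stronglyMeasurable hm stronglyMeasurable_condExp integrable_condExp,
    Pi.sub_apply, sub_self, Pi.zero_apply]

theorem condExp_add_ae_eq_of_condExp_ae_eq_zero (hm : m ≤ m0) [SigmaFinite (μ.trim hm)]
    {A G : Ω → E} (hA : StronglyMeasurable[m] A) (hAi : Integrable A μ) (hGi : Integrable G μ)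
    (hG : μ[G | m] =ᵐ[μ] 0) : μ[A + G | m] =ᵐ[μ] A := by
  filter_upwards [condExp_add hAi hGi m, hG] with ω h1 h2
  rw [h1, Pi.add_apply, h2, condExp_of_stronglyMeasurable hm hA hAi, Pi.zero_apply, add_zero]

theorem ae_eq_of_add_ae_eq_add_of_condExp_ae_eq_zero (hm : m ≤ m0) [SigmaFinite (μ.trim hm)]
    {A B G G' : Ω → E} (hA : StronglyMeasurable[m] A) (hB : StronglyMeasurable[m] B)
    (hAi : Integrable A μ) (hBi : Integrable B μ) (hGi : Integrable G μ)
    (hG'i : Integrable G' μ) (hG : μ[G | m] =ᵐ[μ] 0) (hG' : μ[G' | m] =ᵐ[μ] 0)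
    (h : A + G =ᵐ[μ] B + G') : A =ᵐ[μ] B :=
  calc A =ᵐ[μ] μ[A + G | m] := (condExp_add_ae_eq_of_condExp_ae_eq_zero hm hA hAi hGi hG).symm
    _ =ᵐ[μ] μ[B + G' | m] := condExp_congr_ae h
    _ =ᵐ[μ] B := condExp_add_ae_eq_of_condExp_ae_eq_zero hm hB hBi hG'i hG'

end CondExp

section Representation

variable {Ω : Type*} {m0 : MeasurableSpace Ω} {μ : Measure Ω} [IsFiniteMeasure μ] {N K t : ℕ}
  {𝓕 : Filtration ℕ m0} {X : ℕ → Ω → Fin N → ℝ}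

/-- Entry `(i, j)` is the `i`-th coordinate of `H` on the paths that agree with that of `ω` up
to time `t` and then jump to the `j`-th basis vector (`0` if there is no such path). -/
noncomputable def reprIntegrand (X : ℕ → Ω → Fin N → ℝ) (t : ℕ) (H : Ω → Fin K → ℝ) (ω : Ω) :
    Fin K → Fin N → ℝ :=
  fun i j => extend (pathUpTo X (t + 1)) H 0
    (Fin.snoc (α := fun _ => Fin N → ℝ) (pathUpTo X t ω) (Pi.single j 1)) i

theorem stronglyMeasurable_reprIntegrand (h : IsFiniteNaturalFiltration 𝓕 X) (t : ℕ)
    (H : Ω → Fin K → ℝ) : StronglyMeasurable[𝓕 t] (reprIntegrand X t H) := by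
  refine h.stronglyMeasurable_of_factorsThrough fun a b hab => ?_
  unfold reprIntegrand
  rw [hab]

theorem reprIntegrand_mulVec (hX : ∀ t ω, ∃ i, X t ω = Pi.single i 1) {H : Ω → Fin K → ℝ}
    (hH : H.FactorsThrough (pathUpTo X (t + 1))) (ω : Ω) :
    reprIntegrand X t H ω *ᵥ X (t + 1) ω = H ω := by
  obtain ⟨j, hj⟩ := hX (t + 1) ω
  rw [hj]
  refine (mulVec_single_one (reprIntegrand X t H ω) j).trans (funext fun i => ?_)
  change reprIntegrand X t H ω i j = H ω i
  unfold reprIntegrand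
  rw [← hj, ← pathUpTo_succ, hH.extend_apply]

theorem integrable_mulVec_increment (h : IsFiniteNaturalFiltration 𝓕 X)
    {Z : Ω → Fin K → Fin N → ℝ} (hZ : StronglyMeasurable[𝓕 t] Z) :
    Integrable (fun ω => Z ω *ᵥ (X (t + 1) - μ[X (t + 1) | 𝓕 t]) ω) μ :=
  h.integrable <| (hZ.mono (𝓕.mono t.le_succ)).mulVec <|
    (h.stronglyMeasurable (t + 1)).sub (stronglyMeasurable_condExp.mono (𝓕.mono t.le_succ))

theorem sub_condExp_ae_eq_reprIntegrand_mulVec (h : IsFiniteNaturalFiltration 𝓕 X)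
    (hX : ∀ t ω, ∃ i, X t ω = Pi.single i 1) {H : Ω → Fin K → ℝ}
    (hH : StronglyMeasurable[𝓕 (t + 1)] H) :
    H - μ[H | 𝓕 t] =ᵐ[μ]
      fun ω => reprIntegrand X t H ω *ᵥ (X (t + 1) - μ[X (t + 1) | 𝓕 t]) ω := by
  have hZX : (fun ω => reprIntegrand X t H ω *ᵥ X (t + 1) ω) = H :=
    funext (reprIntegrand_mulVec hX (h.factorsThrough_of_stronglyMeasurable hH))
  have hpull := condExp_mulVec_of_stronglyMeasurable_left (μ := μ)
    (stronglyMeasurable_reprIntegrand h t H) (by rw [hZX]; exact h.integrable hH)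
    (h.integrable (h.stronglyMeasurable (t + 1)))
  rw [hZX] at hpull
  filter_upwards [hpull] with ω hω
  rw [Pi.sub_apply, hω, ← congrFun hZX ω]
  exact (mulVec_sub _ _ _).symm

theorem condExp_mulVec_increment_ae_eq_zero (h : IsFiniteNaturalFiltration 𝓕 X)
    {Z : Ω → Fin K → Fin N → ℝ} (hZ : StronglyMeasurable[𝓕 t] Z) :
    μ[fun ω => Z ω *ᵥ (X (t + 1) - μ[X (t + 1) | 𝓕 t]) ω | 𝓕 t] =ᵐ[μ] 0 := by
  have hXi : Integrable (X (t + 1)) μ := h.integrable (h.stronglyMeasurable (t + 1))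
  filter_upwards [condExp_mulVec_of_stronglyMeasurable_left hZ
      (integrable_mulVec_increment h hZ) (hXi.sub integrable_condExp),
    condExp_sub_condExp_ae_eq_zero (𝓕.le t) hXi] with ω h1 h2
  rw [h1, h2]
  exact mulVec_zero _

theorem ae_eq_of_add_mulVec_ae_eq_add (h : IsFiniteNaturalFiltration 𝓕 X) {M : Ω → Fin N → ℝ}
    (hM : M = X (t + 1) - μ[X (t + 1) | 𝓕 t]) {A A' : Ω → Fin K → ℝ}
    {Z Z' : Ω → Fin K → Fin N → ℝ} (hA : StronglyMeasurable[𝓕 t] A)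
    (hA' : StronglyMeasurable[𝓕 t] A') (hZ : StronglyMeasurable[𝓕 t] Z)
    (hZ' : StronglyMeasurable[𝓕 t] Z')
    (hsum : ∀ᵐ ω ∂μ, A ω + Z ω *ᵥ M ω = A' ω + Z' ω *ᵥ M ω) :
    A =ᵐ[μ] A' ∧ (fun ω => Z ω *ᵥ M ω) =ᵐ[μ] fun ω => Z' ω *ᵥ M ω := by
  subst hM
  have hAA' := ae_eq_of_add_ae_eq_add_of_condExp_ae_eq_zero (𝓕.le t) hA hA'
    (h.integrable hA) (h.integrable hA') (integrable_mulVec_increment h hZ)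
    (integrable_mulVec_increment h hZ') (condExp_mulVec_increment_ae_eq_zero h hZ)
    (condExp_mulVec_increment_ae_eq_zero h hZ') hsum
  refine ⟨hAA', ?_⟩
  filter_upwards [hsum, hAA'] with ω h1 h2
  exact add_left_cancel (h1.trans (congrArg (· + _) h2.symm))

end Representation

theorem sub_sum_Ico_add_sum_Ico_eq_iff {E : Type*} [AddCommGroup E] {T : ℕ} {y f g : ℕ → E}
    {q : E} :
    (∀ t ≤ T, y t - ∑ u ∈ Finset.Ico t T, f u + ∑ u ∈ Finset.Ico t T, g u = q) ↔
      y T = q ∧ ∀ t < T, y t - f t + g t = y (t + 1) := by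
  constructor
  · intro hy
    refine ⟨by simpa using hy T le_rfl, fun t ht => ?_⟩
    have hcur := hy t ht.le
    rw [Finset.sum_eq_sum_Ico_succ_bot ht, Finset.sum_eq_sum_Ico_succ_bot ht,
      ← hy (t + 1) ht] at hcur
    linear_combination (norm := abel) hcur
  · rintro ⟨hT, hstep⟩ t ht
    induction ht using Nat.decreasingInduction with
    | self => simpa using hT
    | of_succ t ht ih =>
      rw [Finset.sum_eq_sum_Ico_succ_bot ht, Finset.sum_eq_sum_Ico_succ_bot ht, ← ih,
        ← hstep t ht]
      abel

def backwardRec {α : Type*} (T : ℕ) (Q : α) (step : ℕ → α → α) (t : ℕ) : α :=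
  if t < T then step t (backwardRec T Q step (t + 1)) else Q
termination_by T - t

theorem backwardRec_of_lt {α : Type*} {T : ℕ} {Q : α} {step : ℕ → α → α} {t : ℕ} (ht : t < T) :
    backwardRec T Q step t = step t (backwardRec T Q step (t + 1)) := by
  rw [backwardRec, if_pos ht]

theorem backwardRec_of_le {α : Type*} {T : ℕ} {Q : α} {step : ℕ → α → α} {t : ℕ} (ht : T ≤ t) :
    backwardRec T Q step t = Q := by
  rw [backwardRec, if_neg ht.not_gt]

section BSDE

variable {Ω : Type*} {m0 : MeasurableSpace Ω} {μ : Measure Ω} {N K T : ℕ}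
  {𝓕 : Filtration ℕ m0} {X M : ℕ → Ω → Fin N → ℝ}
  {F : Ω → ℕ → (Fin K → ℝ) → (Fin K → Fin N → ℝ) → Fin K → ℝ} {Q : Ω → Fin K → ℝ}

def IsBSDESolution (μ : Measure Ω) (F : Ω → ℕ → (Fin K → ℝ) → (Fin K → Fin N → ℝ) → Fin K → ℝ)
    (M : ℕ → Ω → Fin N → ℝ) (T : ℕ) (Q : Ω → Fin K → ℝ) (Y : ℕ → Ω → Fin K → ℝ)
    (Z : ℕ → Ω → Fin K → Fin N → ℝ) : Prop :=
  ∀ t ≤ T, ∀ᵐ ω ∂μ, Y t ω - ∑ u ∈ Finset.Ico t T, F ω u (Y u ω) (Z u ω)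
    + ∑ u ∈ Finset.Ico t T, Z u ω *ᵥ M (u + 1) ω = Q ω

theorem isBSDESolution_iff {Y : ℕ → Ω → Fin K → ℝ} {Z : ℕ → Ω → Fin K → Fin N → ℝ} :
    IsBSDESolution μ F M T Q Y Z ↔ Y T =ᵐ[μ] Q ∧
      ∀ t < T, ∀ᵐ ω ∂μ, Y t ω - F ω t (Y t ω) (Z t ω) + Z t ω *ᵥ M (t + 1) ω = Y (t + 1) ω := by
  simp only [IsBSDESolution, EventuallyEq, ← eventually_imp_distrib_left, ← ae_all_iff,
    ← eventually_and]
  exact eventually_congr (ae_of_all _ fun ω => sub_sum_Ico_add_sum_Ico_eq_iff)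

theorem IsBSDESolution.ae_eq [IsFiniteMeasure μ] (h : IsFiniteNaturalFiltration 𝓕 X)
    (hM : ∀ t, M (t + 1) = X (t + 1) - μ[X (t + 1) | 𝓕 t])
    (hFmeas : ∀ t < T, ∀ (Y : Ω → Fin K → ℝ) (Z : Ω → Fin K → Fin N → ℝ),
      StronglyMeasurable[𝓕 t] Y → StronglyMeasurable[𝓕 t] Z →
      StronglyMeasurable[𝓕 t] (fun ω => F ω t (Y ω) (Z ω)))
    (hFinv : ∀ t < T, ∀ (Y : Ω → Fin K → ℝ) (Z1 Z2 : Ω → Fin K → Fin N → ℝ),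
      (∀ᵐ ω ∂μ, Z1 ω *ᵥ M (t + 1) ω = Z2 ω *ᵥ M (t + 1) ω) →
      ∀ᵐ ω ∂μ, F ω t (Y ω) (Z1 ω) = F ω t (Y ω) (Z2 ω))
    (hFinj : ∀ t < T, ∀ Z : Ω → Fin K → Fin N → ℝ,
      ∀ᵐ ω ∂μ, Injective (fun y : Fin K → ℝ => y - F ω t y (Z ω)))
    {Y Y' : ℕ → Ω → Fin K → ℝ} {Z Z' : ℕ → Ω → Fin K → Fin N → ℝ}
    (hY : ∀ t, StronglyMeasurable[𝓕 t] (Y t)) (hZ : ∀ t, StronglyMeasurable[𝓕 t] (Z t))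
    (hY' : ∀ t, StronglyMeasurable[𝓕 t] (Y' t)) (hZ' : ∀ t, StronglyMeasurable[𝓕 t] (Z' t))
    (hsol : IsBSDESolution μ F M T Q Y Z) (hsol' : IsBSDESolution μ F M T Q Y' Z') :
    (∀ t ≤ T, Y t =ᵐ[μ] Y' t) ∧
      ∀ t < T, (fun ω => Z t ω *ᵥ M (t + 1) ω) =ᵐ[μ] fun ω => Z' t ω *ᵥ M (t + 1) ω := by
  rw [isBSDESolution_iff] at hsol hsol'
  have hstep : ∀ t < T, Y (t + 1) =ᵐ[μ] Y' (t + 1) →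
      (fun ω => Y t ω - F ω t (Y t ω) (Z t ω)) =ᵐ[μ] (fun ω => Y' t ω - F ω t (Y' t ω) (Z' t ω))
        ∧ (fun ω => Z t ω *ᵥ M (t + 1) ω) =ᵐ[μ] fun ω => Z' t ω *ᵥ M (t + 1) ω := by
    intro t ht hnext
    refine ae_eq_of_add_mulVec_ae_eq_add h (hM t) ((hY t).sub (hFmeas t ht _ _ (hY t) (hZ t)))
      ((hY' t).sub (hFmeas t ht _ _ (hY' t) (hZ' t))) (hZ t) (hZ' t) ?_
    filter_upwards [hsol.2 t ht, hsol'.2 t ht, hnext] with ω h1 h2 h3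
    rw [h1, h2, h3]
  have hYeq : ∀ t ≤ T, Y t =ᵐ[μ] Y' t := by
    intro t ht
    induction ht using Nat.decreasingInduction with
    | self => exact hsol.1.trans hsol'.1.symm
    | of_succ t ht ih =>
      obtain ⟨hA, hG⟩ := hstep t ht ih
      filter_upwards [hA, hFinv t ht (Y' t) (Z t) (Z' t) hG, hFinj t ht (Z t)] with ω h1 h2 h3
      exact h3 (h1.trans (by simp only [h2]))
  exact ⟨hYeq, fun t ht => (hstep t ht (hYeq (t + 1) ht)).2⟩

noncomputable def bsdeStep (μ : Measure Ω) (𝓕 : Filtration ℕ m0) (X : ℕ → Ω → Fin N → ℝ)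
    (F : Ω → ℕ → (Fin K → ℝ) → (Fin K → Fin N → ℝ) → Fin K → ℝ) (t : ℕ)
    (H : Ω → Fin K → ℝ) : Ω → Fin K → ℝ :=
  fun ω => invFun (fun y => y - F ω t y (reprIntegrand X t H ω)) (μ[H | 𝓕 t] ω)

theorem stronglyMeasurable_bsdeStep (h : IsFiniteNaturalFiltration 𝓕 X) {t : ℕ}
    (hF : ∀ (Y : Ω → Fin K → ℝ) (Z : Ω → Fin K → Fin N → ℝ),
      StronglyMeasurable[𝓕 t] Y → StronglyMeasurable[𝓕 t] Z →
      StronglyMeasurable[𝓕 t] (fun ω => F ω t (Y ω) (Z ω)))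
    (H : Ω → Fin K → ℝ) : StronglyMeasurable[𝓕 t] (bsdeStep μ 𝓕 X F t H) := by
  refine h.stronglyMeasurable_of_factorsThrough fun a b hab => ?_
  have hZ := stronglyMeasurable_reprIntegrand h t H
  have hF' : ∀ y, F a t y (reprIntegrand X t H a) = F b t y (reprIntegrand X t H b) := fun y =>
    h.factorsThrough_of_stronglyMeasurable (hF _ _ stronglyMeasurable_const hZ) hab
  simp only [bsdeStep, hF', h.factorsThrough_of_stronglyMeasurable stronglyMeasurable_condExp hab]

theorem bsdeStep_sub_add_mulVec_ae_eq [IsFiniteMeasure μ] (h : IsFiniteNaturalFiltration 𝓕 X)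
    (hX : ∀ t ω, ∃ i, X t ω = Pi.single i 1) {t : ℕ} {H : Ω → Fin K → ℝ}
    (hH : StronglyMeasurable[𝓕 (t + 1)] H)
    (hsurj : ∀ᵐ ω ∂μ, Surjective fun y => y - F ω t y (reprIntegrand X t H ω)) :
    ∀ᵐ ω ∂μ, bsdeStep μ 𝓕 X F t H ω - F ω t (bsdeStep μ 𝓕 X F t H ω) (reprIntegrand X t H ω)
      + reprIntegrand X t H ω *ᵥ (X (t + 1) - μ[X (t + 1) | 𝓕 t]) ω = H ω := by
  filter_upwards [hsurj, sub_condExp_ae_eq_reprIntegrand_mulVec h hX hH] with ω hs hrep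
  have hsolve : bsdeStep μ 𝓕 X F t H ω - F ω t (bsdeStep μ 𝓕 X F t H ω) (reprIntegrand X t H ω)
      = μ[H | 𝓕 t] ω := rightInverse_invFun hs _
  rw [← hrep, hsolve, Pi.sub_apply, add_sub_cancel]

theorem exists_isBSDESolution [IsFiniteMeasure μ] (h : IsFiniteNaturalFiltration 𝓕 X)
    (hX : ∀ t ω, ∃ i, X t ω = Pi.single i 1)
    (hM : ∀ t, M (t + 1) = X (t + 1) - μ[X (t + 1) | 𝓕 t])
    (hFmeas : ∀ t < T, ∀ (Y : Ω → Fin K → ℝ) (Z : Ω → Fin K → Fin N → ℝ),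
      StronglyMeasurable[𝓕 t] Y → StronglyMeasurable[𝓕 t] Z →
      StronglyMeasurable[𝓕 t] (fun ω => F ω t (Y ω) (Z ω)))
    (hFsurj : ∀ t < T, ∀ Z : Ω → Fin K → Fin N → ℝ,
      ∀ᵐ ω ∂μ, Surjective (fun y : Fin K → ℝ => y - F ω t y (Z ω)))
    (hQ : StronglyMeasurable[𝓕 T] Q) :
    ∃ (Y : ℕ → Ω → Fin K → ℝ) (Z : ℕ → Ω → Fin K → Fin N → ℝ),
      (∀ t, StronglyMeasurable[𝓕 t] (Y t)) ∧ (∀ t, StronglyMeasurable[𝓕 t] (Z t)) ∧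
        IsBSDESolution μ F M T Q Y Z := by
  set Y := backwardRec T Q (bsdeStep μ 𝓕 X F)
  have hYlt : ∀ t < T, Y t = bsdeStep μ 𝓕 X F t (Y (t + 1)) := fun t ht => backwardRec_of_lt ht
  have hYge : ∀ t ≥ T, Y t = Q := fun t ht => backwardRec_of_le ht
  have hY : ∀ t, StronglyMeasurable[𝓕 t] (Y t) := by
    intro t
    rcases lt_or_ge t T with ht | ht
    · rw [hYlt t ht]
      exact stronglyMeasurable_bsdeStep h (hFmeas t ht) _
    · rw [hYge t ht]
      exact hQ.mono (𝓕.mono ht)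
  refine ⟨Y, fun t => reprIntegrand X t (Y (t + 1)), hY,
    fun t => stronglyMeasurable_reprIntegrand h t _,
    isBSDESolution_iff.2 ⟨by rw [hYge T le_rfl], fun t ht => ?_⟩⟩
  rw [hYlt t ht]
  exact hM t ▸ bsdeStep_sub_add_mulVec_ae_eq h hX (hY (t + 1)) (hFsurj t ht _)

end BSDE

theorem bsde_existence_uniqueness_general
    {Ω : Type*} {m0 : MeasurableSpace Ω} {μ : Measure Ω} [IsProbabilityMeasure μ]
    {N K T : ℕ} (𝓕 : Filtration ℕ m0)
    (X : ℕ → Ω → (Fin N → ℝ))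
    (hXval : ∀ t ω, ∃ i : Fin N, X t ω = fun j => if j = i then (1 : ℝ) else 0)
    (h𝓕 : ∀ t, (𝓕 t : MeasurableSpace Ω)
      = MeasurableSpace.comap (fun ω (s : Fin (t + 1)) => X (s : ℕ) ω) inferInstance)
    (M : ℕ → Ω → (Fin N → ℝ))
    (hM : ∀ t, M t = X t - μ[X t | 𝓕 (t - 1)])
    (F : Ω → ℕ → (Fin K → ℝ) → (Fin K → Fin N → ℝ) → (Fin K → ℝ))
    (hFmeas : ∀ t < T, ∀ (Y : Ω → Fin K → ℝ) (Z : Ω → Fin K → Fin N → ℝ),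
      StronglyMeasurable[𝓕 t] Y → StronglyMeasurable[𝓕 t] Z →
      StronglyMeasurable[𝓕 t] (fun ω => F ω t (Y ω) (Z ω)))
    -- Assumption (i): invariance of F under ∼_M equivalent strategies
    (hFinv : ∀ t < T, ∀ (Y : Ω → Fin K → ℝ) (Z1 Z2 : Ω → Fin K → Fin N → ℝ),
      (∀ᵐ ω ∂μ, (fun i => ∑ j, Z1 ω i j * M (t + 1) ω j)
          = (fun i => ∑ j, Z2 ω i j * M (t + 1) ω j)) →
      ∀ᵐ ω ∂μ, F ω t (Y ω) (Z1 ω) = F ω t (Y ω) (Z2 ω))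
    -- Assumption (ii): a.s. bijectivity of y ↦ y - F(ω,t,y,z)
    (hFbij : ∀ t < T, ∀ Z : Ω → Fin K → Fin N → ℝ,
      ∀ᵐ ω ∂μ, Function.Bijective (fun y : Fin K → ℝ => y - F ω t y (Z ω)))
    (Q : Ω → Fin K → ℝ)
    (hQmeas : StronglyMeasurable[𝓕 T] Q) :
    ∃ (Y : ℕ → Ω → Fin K → ℝ) (Z : ℕ → Ω → Fin K → Fin N → ℝ),
      (∀ t, StronglyMeasurable[𝓕 t] (Y t)) ∧
      (∀ t, StronglyMeasurable[𝓕 t] (Z t)) ∧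
      (∀ t ≤ T, ∀ᵐ ω ∂μ,
        Y t ω - ∑ u ∈ Finset.Ico t T, F ω u (Y u ω) (Z u ω)
          + ∑ u ∈ Finset.Ico t T, (fun i => ∑ j, Z u ω i j * M (u + 1) ω j) = Q ω) ∧
      ∀ (Y' : ℕ → Ω → Fin K → ℝ) (Z' : ℕ → Ω → Fin K → Fin N → ℝ),
        (∀ t, StronglyMeasurable[𝓕 t] (Y' t)) →
        (∀ t, StronglyMeasurable[𝓕 t] (Z' t)) →
        (∀ t ≤ T, ∀ᵐ ω ∂μ,
          Y' t ω - ∑ u ∈ Finset.Ico t T, F ω u (Y' u ω) (Z' u ω)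
            + ∑ u ∈ Finset.Ico t T, (fun i => ∑ j, Z' u ω i j * M (u + 1) ω j) = Q ω) →
        (∀ t ≤ T, Y t =ᵐ[μ] Y' t) ∧
        (∀ u < T, ∀ᵐ ω ∂μ,
          (fun i => ∑ j, Z u ω i j * M (u + 1) ω j)
            = (fun i => ∑ j, Z' u ω i j * M (u + 1) ω j)) := by
  have hX : ∀ t ω, ∃ i, X t ω = Pi.single i 1 := fun t ω =>
    (hXval t ω).imp fun i hi => hi.trans (funext fun j => (Pi.single_apply i 1 j).symm)
  have hnat : IsFiniteNaturalFiltration 𝓕 X :=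
    ⟨fun t => (finite_range fun i : Fin N => (Pi.single i 1 : Fin N → ℝ)).subset
      (range_subset_iff.2 fun ω => (hX t ω).imp fun _ hi => hi.symm), h𝓕⟩
  have hM' : ∀ t, M (t + 1) = X (t + 1) - μ[X (t + 1) | 𝓕 t] := fun t => hM (t + 1)
  obtain ⟨Y, Z, hY, hZ, hsol⟩ := exists_isBSDESolution hnat hX hM' hFmeas
    (fun t ht Z => (hFbij t ht Z).mono fun _ hbij => hbij.surjective) hQmeas
  exact ⟨Y, Z, hY, hZ, hsol, fun Y' Z' hY' hZ' hsol' => hsol.ae_eq hnat hM' hFmeas hFinv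
    (fun t ht Z => (hFbij t ht Z).mono fun _ hbij => hbij.injective) hY hZ hY' hZ' hsol'⟩

/-- existence and uniqueness of solutions to the discrete BSDE
`Y t - ∑_{t ≤ u < T} F(ω,u,Y u,Z u) + ∑_{t ≤ u < T} Z u • M (u+1) = Q` under
(i) invariance of `F` under `∼_M` in `Z`, and (ii) a.s. bijectivity of
`y ↦ y - F(ω,t,y,z)`. -/
theorem bsde_existence_uniqueness
    {Ω : Type*} {m0 : MeasurableSpace Ω} {μ : Measure Ω} [IsProbabilityMeasure μ]
    {N K T : ℕ} (𝓕 : Filtration ℕ m0)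
    (X : ℕ → Ω → (Fin N → ℝ))
    (hXval : ∀ t ω, ∃ i : Fin N, X t ω = fun j => if j = i then (1 : ℝ) else 0)
    (h𝓕 : ∀ t, (𝓕 t : MeasurableSpace Ω)
      = MeasurableSpace.comap (fun ω (s : Fin (t + 1)) => X (s : ℕ) ω) inferInstance)
    (hXint : ∀ t, Integrable (X t) μ)
    (M : ℕ → Ω → (Fin N → ℝ))
    (hM : ∀ t, M t = X t - μ[X t | 𝓕 (t - 1)])
    (F : Ω → ℕ → (Fin K → ℝ) → (Fin K → Fin N → ℝ) → (Fin K → ℝ))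
    (hFmeas : ∀ t < T, ∀ (Y : Ω → Fin K → ℝ) (Z : Ω → Fin K → Fin N → ℝ),
      StronglyMeasurable[𝓕 t] Y → StronglyMeasurable[𝓕 t] Z →
      StronglyMeasurable[𝓕 t] (fun ω => F ω t (Y ω) (Z ω)))
    -- Assumption (i): invariance of F under ∼_M equivalent strategies
    (hFinv : ∀ t < T, ∀ (Y : Ω → Fin K → ℝ) (Z1 Z2 : Ω → Fin K → Fin N → ℝ),
      (∀ᵐ ω ∂μ, (fun i => ∑ j, Z1 ω i j * M (t + 1) ω j)
          = (fun i => ∑ j, Z2 ω i j * M (t + 1) ω j)) →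
      ∀ᵐ ω ∂μ, F ω t (Y ω) (Z1 ω) = F ω t (Y ω) (Z2 ω))
    -- Assumption (ii): a.s. bijectivity of y ↦ y - F(ω,t,y,z)
    (hFbij : ∀ t < T, ∀ Z : Ω → Fin K → Fin N → ℝ,
      ∀ᵐ ω ∂μ, Function.Bijective (fun y : Fin K → ℝ => y - F ω t y (Z ω)))
    (Q : Ω → Fin K → ℝ)
    (hQmeas : StronglyMeasurable[𝓕 T] Q)
    (hQbdd : ∃ C, ∀ ω, ‖Q ω‖ ≤ C) :
    ∃ (Y : ℕ → Ω → Fin K → ℝ) (Z : ℕ → Ω → Fin K → Fin N → ℝ),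
      (∀ t, StronglyMeasurable[𝓕 t] (Y t)) ∧
      (∀ t, StronglyMeasurable[𝓕 t] (Z t)) ∧
      (∀ t ≤ T, ∀ᵐ ω ∂μ,
        Y t ω - ∑ u ∈ Finset.Ico t T, F ω u (Y u ω) (Z u ω)
          + ∑ u ∈ Finset.Ico t T, (fun i => ∑ j, Z u ω i j * M (u + 1) ω j) = Q ω) ∧
      ∀ (Y' : ℕ → Ω → Fin K → ℝ) (Z' : ℕ → Ω → Fin K → Fin N → ℝ),
        (∀ t, StronglyMeasurable[𝓕 t] (Y' t)) →
        (∀ t, StronglyMeasurable[𝓕 t] (Z' t)) →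
        (∀ t ≤ T, ∀ᵐ ω ∂μ,
          Y' t ω - ∑ u ∈ Finset.Ico t T, F ω u (Y' u ω) (Z' u ω)
            + ∑ u ∈ Finset.Ico t T, (fun i => ∑ j, Z' u ω i j * M (u + 1) ω j) = Q ω) →
        (∀ t ≤ T, Y t =ᵐ[μ] Y' t) ∧
        (∀ u < T, ∀ᵐ ω ∂μ,
          (fun i => ∑ j, Z u ω i j * M (u + 1) ω j)
            = (fun i => ∑ j, Z' u ω i j * M (u + 1) ω j)) :=
  bsde_existence_uniqueness_general 𝓕 X hXval h𝓕 M hM F hFmeas hFinv hFbij Q hQmeas
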